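/- arXiv:2411.15359 — 5 statements merged into one kernel-verified Lean document; each statement's English description precedes it below -/
import Mathlib

section
/- Let P be a filtered poset and for each i ∈ P let P_i be a filtered poset, together with a partial order on the disjoint union P̄ = ⋃_{i∈P} {i} × P_i defined by (i,t) ≤ (j,s) iff (i = j and t ≤ s in P_i) or (i < j and a compatibility condition holds). If for any i < j in P and t ∈ P_i there exists s ∈ P_j with (i,t) ≤ (j,s), and the orders on each P_i are compatible (i.e. (i,t) ≤ (i,t') ≤ (j,s) implies (i,t) ≤ (j,s), and (i,t) ≤ (j,s) ≤ (j,s') implies (i,t) ≤ (j,s')), then P̄ is a filtered poset. -/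
/-!
STATEMENT 0: A filtered family of filtered posets, glued on the disjoint union
`Σ i, P i` with a partial order `r` characterized by membership in the same fiber
or a compatibility condition `Cc`, yields a filtered poset, provided the gluing is
cofinal (for `i < j` and `t : P i` there is `s : P j` above it).

A poset is filtered iff it is nonempty and any two elements admit a common upper bound.
-/

theorem stmt0 {ι : Type*} [PartialOrder ι]
    (hι : Nonempty ι) (hdir : ∀ i j : ι, ∃ k, i ≤ k ∧ j ≤ k)
    (P : ι → Type*) [∀ i, PartialOrder (P i)]
    (hP : ∀ i, Nonempty (P i))
    (hPdir : ∀ i, ∀ t t' : P i, ∃ t'' : P i, t ≤ t'' ∧ t' ≤ t'')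
    (r : (Σ i, P i) → (Σ i, P i) → Prop)
    (hrefl : ∀ x, r x x)
    (htrans : ∀ x y z, r x y → r y z → r x z)
    (hantisymm : ∀ x y, r x y → r y x → x = y)
    (Cc : ∀ i j : ι, P i → P j → Prop)
    (hchar : ∀ (i j : ι) (t : P i) (s : P j),
      r ⟨i, t⟩ ⟨j, s⟩ ↔ ((∃ h : i = j, h ▸ t ≤ s) ∨ (i < j ∧ Cc i j t s)))
    (hcof : ∀ i j : ι, i < j → ∀ t : P i, ∃ s : P j, r ⟨i, t⟩ ⟨j, s⟩)
    (hcompat₁ : ∀ (i j : ι) (t t' : P i) (s : P j),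
      r ⟨i, t⟩ ⟨i, t'⟩ → r ⟨i, t'⟩ ⟨j, s⟩ → r ⟨i, t⟩ ⟨j, s⟩)
    (hcompat₂ : ∀ (i j : ι) (t : P i) (s s' : P j),
      r ⟨i, t⟩ ⟨j, s⟩ → r ⟨j, s⟩ ⟨j, s'⟩ → r ⟨i, t⟩ ⟨j, s'⟩) :
    Nonempty (Σ i, P i) ∧ ∀ x y : Σ i, P i, ∃ z, r x z ∧ r y z := by
  have fiber : ∀ (k : ι) (a b : P k), a ≤ b → r ⟨k, a⟩ ⟨k, b⟩ := fun k a b h =>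
    (hchar k k a b).mpr (Or.inl ⟨rfl, h⟩)
  have key : ∀ (i : ι) (t : P i) (k : ι), i ≤ k → ∀ u₀ : P k,
      ∃ u : P k, r ⟨i, t⟩ ⟨k, u⟩ ∧ r ⟨k, u₀⟩ ⟨k, u⟩ := by
    intro i t k hik u₀
    rcases eq_or_lt_of_le hik with rfl | hlt
    · obtain ⟨u, h1, h2⟩ := hPdir i t u₀
      exact ⟨u, fiber i t u h1, fiber i u₀ u h2⟩
    · obtain ⟨s, hs⟩ := hcof i k hlt t
      obtain ⟨u, h1, h2⟩ := hPdir k s u₀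
      exact ⟨u, hcompat₂ i k t s u hs (fiber k s u h1), fiber k u₀ u h2⟩
  obtain ⟨i0⟩ := hι
  refine ⟨⟨⟨i0, (hP i0).some⟩⟩, ?_⟩
  rintro ⟨i, t⟩ ⟨j, s⟩
  obtain ⟨k, hik, hjk⟩ := hdir i j
  obtain ⟨u, hu, -⟩ := key i t k hik (hP k).some
  obtain ⟨z, hz1, hz2⟩ := key j s k hjk u
  exact ⟨⟨k, z⟩, htrans _ _ _ hu hz2, hz1⟩
end

section
/- Let T be a triangulated category with a t-structure such that the coaisle T_{≥0} is closed under countable coproducts, H^0_t : T → T^♥ preserves countable coproducts, and the heart T^♥ satisfies AB5. Then T is right complete for the t-structure if and only if ⋂_{n≥0} T_{≥n} = 0. -/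
/-!
If `X` lies in every `T_{≥n}`, each `τ_{≤n} X → X` vanishes, so the zero map out of the homotopy
colimit must be an isomorphism and `X = 0`.

Conversely, let `φ : L → Z` come from the `1 - shift` triangle and let `W` be its cone, which lies
in `T_{≥-2}`. Fix a degree `k` and write `Hᵏ = H ∘ [k]`. The maps `Hᵏ(τ_{≤n} Z) → Hᵏ Z` are
isomorphisms for `n ≥ k`, so `Hᵏ Z` is the colimit of the sequence `Hᵏ(τ_{≤n} Z)`, hence the
cokernel of `1 - shift` on `⨁ₙ Hᵏ(τ_{≤n} Z)`. By AB5 that `1 - shift` is injective: the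
coproduct is the filtered colimit of the finite partial coproducts, on which `1 - shift` becomes
`1 - nilpotent` after projecting away the top summand. Injectivity in degree `k + 1` kills the
connecting map of the long exact sequence, so `Hᵏ L` is also the cokernel of `1 - shift`, and
`Hᵏ φ` is an isomorphism. Thus `W` lies in the homological kernel of `H`, which together with
`W ∈ T_{≥-2}` puts `W` in every `T_{≥n}`; hence `W = 0` and `φ` is an isomorphism.
-/

open CategoryTheory Limits Pretriangulated Triangulated

namespace Stmt3

variable {C : Type*} [Category C]
  [Preadditive C] [HasZeroObject C] [HasShift C ℤ]
  [∀ n : ℤ, (shiftFunctor C n).Additive] [Pretriangulated C]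
  [HasColimitsOfShape (Discrete ℕ) C]
  (τle : ℤ → C ⥤ C) (σ : ∀ n : ℤ, τle n ⟶ τle (n + 1))

/-- The `1 - shift` endomorphism of `∐ (τ_{≤n} Z)`. -/
noncomputable def oneMinusShift (Z : C) :
    (∐ fun n : ℕ => (τle (n : ℤ)).obj Z) ⟶ (∐ fun n : ℕ => (τle (n : ℤ)).obj Z) :=
  Sigma.desc fun n => Sigma.ι (fun m : ℕ => (τle (m : ℤ)).obj Z) n -
    ((σ (n : ℤ)).app Z ≫ eqToHom (by rw [Nat.cast_succ]) ≫
      Sigma.ι (fun m : ℕ => (τle (m : ℤ)).obj Z) (n + 1))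

/-- Right completeness of the t-structure: any map from a homotopy colimit of the
truncations `τ_{≤n} Z` to `Z ∈ T_{≥0}` arising from (T3) is an isomorphism. -/
def RightComplete (t : TStructure C) (η : ∀ n : ℤ, τle n ⟶ 𝟭 C) : Prop :=
  ∀ (Z : C), t.ge 0 Z →
    ∀ (L : C) (g : (∐ fun n : ℕ => (τle (n : ℤ)).obj Z) ⟶ L)
      (d : L ⟶ (∐ fun n : ℕ => (τle (n : ℤ)).obj Z)⟦(1 : ℤ)⟧),
      (Triangle.mk (oneMinusShift τle σ Z) g d ∈ distTriang C) →
      ∀ φ : L ⟶ Z,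
        (∀ n : ℕ, Sigma.ι (fun m : ℕ => (τle (m : ℤ)).obj Z) n ≫ g ≫ φ =
          (η (n : ℤ)).app Z) →
        IsIso φ

end Stmt3

namespace Stmt3

section PartialCoproducts

variable {A : Type*} [Category A] [Preadditive A] [HasFiniteBiproducts A] (a : ℕ → A)

noncomputable abbrev partialCoproduct (r : ℕ) : ℕ ⥤ A where
  obj n := ⨁ fun i : Fin (n + r) => a i
  map {n n'} h := biproduct.desc fun i => biproduct.ι (fun i : Fin (n' + r) => a i)
    (Fin.castLE (by have := leOfHom h; omega) i)
  map_id n := by ext; simp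
  map_comp h h' := by ext; simp [Fin.castLE]

variable {a} {P : A} (ι : ∀ m, a m ⟶ P)

noncomputable def partialCoproductCocone (r : ℕ) : Cocone (partialCoproduct a r) where
  pt := P
  ι.app n := biproduct.desc fun i => ι i
  ι.naturality n n' h := by ext; simp

noncomputable def isColimitPartialCoproductCocone (hP : IsColimit (Cofan.mk P ι)) (r : ℕ) :
    IsColimit (partialCoproductCocone ι r) where
  desc c := hP.desc (Cofan.mk c.pt fun m =>
    biproduct.ι (fun i : Fin (m + 1 + r) => a i) ⟨m, by omega⟩ ≫ c.ι.app (m + 1))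
  fac c n := by
    refine biproduct.hom_ext' _ _ fun i => ?_
    have hi := hP.fac (Cofan.mk c.pt fun m =>
      biproduct.ι (fun i : Fin (m + 1 + r) => a i) ⟨m, by omega⟩ ≫ c.ι.app (m + 1)) ⟨i⟩
    dsimp only [partialCoproductCocone, Cofan.mk_ι_app] at hi ⊢
    rw [biproduct.ι_desc_assoc, hi, ← c.w (homOfLE (le_max_left ((i : ℕ) + 1) n)),
      ← c.w (homOfLE (le_max_right ((i : ℕ) + 1) n))]
    simp [Fin.castLE]
  uniq c m hm := hP.hom_ext fun ⟨j⟩ => by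
    have hj := hP.fac (Cofan.mk c.pt fun m =>
      biproduct.ι (fun i : Fin (m + 1 + r) => a i) ⟨m, by omega⟩ ≫ c.ι.app (m + 1)) ⟨j⟩
    dsimp only [partialCoproductCocone, Cofan.mk_ι_app] at hj hm ⊢
    rw [hj, ← hm (j + 1)]
    erw [biproduct.ι_desc_assoc]

variable (f : ∀ m, a m ⟶ a (m + 1))

noncomputable def partialOneMinusShift : partialCoproduct a 0 ⟶ partialCoproduct a 1 where
  app n := biproduct.desc fun i : Fin (n + 0) =>
    biproduct.ι (fun j : Fin (n + 1) => a j) ⟨i, by omega⟩ -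
      f i ≫ biproduct.ι (fun j : Fin (n + 1) => a j) ⟨i + 1, by omega⟩
  naturality n n' h := by ext; simp [Fin.castLE]

noncomputable def partialShift (n : ℕ) : End (⨁ fun i : Fin (n + 0) => a i) :=
  biproduct.desc fun i => if h : (i : ℕ) + 1 < n then
    f i ≫ biproduct.ι (fun j : Fin (n + 0) => a j) ⟨i + 1, h⟩ else 0

lemma ι_comp_partialShift_pow (n k : ℕ) (i : Fin (n + 0)) (hik : n ≤ i + k) :
    biproduct.ι _ i ≫ partialShift f n ^ k = 0 := by
  induction k generalizing i with
  | zero => omega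
  | succ k ih =>
    have hι : biproduct.ι _ i ≫ partialShift f n = _ := biproduct.ι_desc _ _
    rw [pow_succ, End.mul_def, reassoc_of% hι]
    split_ifs with h
    · rw [Category.assoc, ih ⟨i + 1, h⟩ (by simp only; omega), comp_zero]
    · rw [zero_comp]

lemma isNilpotent_partialShift (n : ℕ) : IsNilpotent (partialShift f n) :=
  ⟨n, biproduct.hom_ext' _ _ fun i => by
    rw [ι_comp_partialShift_pow f n n i (by omega), comp_zero]⟩

lemma partialOneMinusShift_app_comp_restrict (n : ℕ) :
    (partialOneMinusShift f).app n ≫ (biproduct.lift fun i : Fin (n + 0) =>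
      biproduct.π (fun j : Fin (n + 1) => a j) ⟨i, by omega⟩ : _ ⟶ ⨁ fun i : Fin (n + 0) => a i) =
      (1 - partialShift f n : End _) := by
  refine biproduct.hom_ext' _ _ fun i => biproduct.hom_ext _ _ fun i' => ?_
  erw [Preadditive.comp_sub, Preadditive.sub_comp]
  simp only [Nat.add_zero, partialOneMinusShift, biproduct.ι_desc_assoc, Preadditive.sub_comp,
    Category.assoc, biproduct.lift_π, biproduct.ι_π, Fin.mk.injEq, End.one_def, Category.comp_id,
    partialShift, biproduct.ι_desc]
  congr 1
  · split_ifs with h₁ h₂ h₂ <;> first | rfl | simp_all [Fin.ext_iff]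
  · split_ifs with h₁ h₂ h₂
    · simp [biproduct.ι_π, h₁]
    · exact absurd (h₁ ▸ i'.isLt) h₂
    · simp [Fin.ext_iff, h₁]
    · simp

instance (n : ℕ) : Mono ((partialOneMinusShift f).app n) :=
  have : IsIso (1 - partialShift f n) :=
    (isUnit_iff_isIso _).1 (isNilpotent_partialShift f n).isUnit_one_sub
  mono_of_mono_fac (partialOneMinusShift_app_comp_restrict f n)

lemma partialCoproductCocone_ι_app_comp {v : P ⟶ P} (hv : ∀ m, ι m ≫ v = ι m - f m ≫ ι (m + 1))
    (n : ℕ) : (partialCoproductCocone ι 0).ι.app n ≫ v =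
      (partialOneMinusShift f).app n ≫ (partialCoproductCocone ι 1).ι.app n := by
  refine biproduct.hom_ext' _ _ fun i => ?_
  dsimp only [partialCoproductCocone, partialOneMinusShift]
  simp [hv]

end PartialCoproducts

section Telescope

variable {A : Type*} [Category A] {a : ℕ → A} (f : ∀ m, a m ⟶ a (m + 1))

lemma mono_of_ι_comp_eq_sub [Abelian A] [HasColimitsOfShape ℕ A] [HasExactColimitsOfShape ℕ A]
    {P : A} {ι : ∀ m, a m ⟶ P} (hP : IsColimit (Cofan.mk P ι)) {v : P ⟶ P}
    (hv : ∀ m, ι m ≫ v = ι m - f m ≫ ι (m + 1)) : Mono v :=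
  have := Abelian.hasFiniteBiproducts (C := A)
  have := NatTrans.mono_of_mono_app (partialOneMinusShift f)
  colim.map_mono' (partialOneMinusShift f) (isColimitPartialCoproductCocone ι hP 0)
    (isColimitPartialCoproductCocone ι hP 1) v (partialCoproductCocone_ι_app_comp ι f hv)

lemma eq_of_comp_succ_of_eventually_epi {T : A} {x y : ∀ m, a m ⟶ T}
    (hx : ∀ m, x m = f m ≫ x (m + 1)) (hy : ∀ m, y m = f m ≫ y (m + 1)) {N : ℕ}
    (hN : x N = y N) (hf : ∀ m, N ≤ m → Epi (f m)) (m : ℕ) : x m = y m := by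
  rcases le_total N m with h | h
  · induction m, h using Nat.le_induction with
    | base => exact hN
    | succ m hm ih =>
      have := hf m hm
      rw [← cancel_epi (f m), ← hx, ← hy, ih]
  · induction h using Nat.decreasingInduction with
    | self => exact hN
    | of_succ m _ ih => rw [hx, hy, ih]

noncomputable def isColimitCokernelCoforkOfEventuallyIso [Preadditive A] {P : A}
    {ι : ∀ m, a m ⟶ P} (hP : IsColimit (Cofan.mk P ι)) {v : P ⟶ P}
    (hv : ∀ m, ι m ≫ v = ι m - f m ≫ ι (m + 1)) {B : A} (c : ∀ m, a m ⟶ B)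
    (hc : ∀ m, f m ≫ c (m + 1) = c m) (N : ℕ) (hcN : ∀ m, N ≤ m → IsIso (c m))
    {w : P ⟶ B} (hw : ∀ m, ι m ≫ w = c m) (hvw : v ≫ w = 0) :
    IsColimit (CokernelCofork.ofπ w hvw) :=
  have := hcN N le_rfl
  have hf (m : ℕ) (hm : N ≤ m) : Epi (f m) :=
    have := hcN m hm
    have := hcN (m + 1) (by omega)
    have := IsIso.of_isIso_fac_right (hc m)
    inferInstance
  -- `t` kills `1 - shift`, so all `ι m ≫ t` are determined by `ι N ≫ t`
  CokernelCofork.IsColimit.ofπ _ _ (fun t _ => inv (c N) ≫ ι N ≫ t)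
    (fun t ht => hP.hom_ext fun ⟨m⟩ => by
      have hιt (m : ℕ) : ι m ≫ t = f m ≫ ι (m + 1) ≫ t := by
        rw [← sub_eq_zero, ← Category.assoc, ← Preadditive.sub_comp, ← hv, Category.assoc, ht,
          comp_zero]
      simpa only [Cofan.mk_ι_app, reassoc_of% hw] using
        eq_of_comp_succ_of_eventually_epi f (x := fun m => c m ≫ inv (c N) ≫ ι N ≫ t)
          (fun m => by rw [reassoc_of% hc m]) hιt (IsIso.hom_inv_id_assoc _ _) hf m)
    (fun t _ s hs => by rw [← hs, reassoc_of% hw N, IsIso.inv_hom_id_assoc])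

end Telescope

lemma isIso_of_isColimit_cokernelCofork {A : Type*} [Category A] [HasZeroMorphisms A]
    {X Y Z Z' : A} {v : X ⟶ Y} {g : Y ⟶ Z} {w : Y ⟶ Z'} {φ : Z ⟶ Z'} (hgφ : g ≫ φ = w)
    {hvg : v ≫ g = 0} {hvw : v ≫ w = 0} (hg : IsColimit (CokernelCofork.ofπ g hvg))
    (hw : IsColimit (CokernelCofork.ofπ w hvw)) : IsIso φ := by
  have : φ = (hg.coconePointUniqueUpToIso hw).hom := Cofork.IsColimit.hom_ext hg
    (hgφ.trans (hg.comp_coconePointUniqueUpToIso_hom hw WalkingParallelPair.one).symm)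
  rw [this]
  infer_instance

lemma exists_hasExactColimitsOfShape_nat.{v, u} (A : Type u) [Category.{v} A]
    [HasFilteredColimits A] [AB5 A] :
    ∃ _ : HasColimitsOfShape ℕ A, HasExactColimitsOfShape ℕ A :=
  have : HasFilteredColimitsOfSize.{0, 0} A := hasFilteredColimitsOfSize_shrink
  have : AB5OfSize.{0, 0} A := AB5OfSize_shrink.{0, 0, v, v, v, u} A
  ⟨inferInstance, inferInstance⟩

section Truncations

variable {C : Type*} [Category C] (τle : ℤ → C ⥤ C) (σ : ∀ n : ℤ, τle n ⟶ τle (n + 1))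

noncomputable def truncTransition (Z : C) (m : ℕ) :
    (τle (m : ℤ)).obj Z ⟶ (τle ((m + 1 : ℕ) : ℤ)).obj Z :=
  (σ (m : ℤ)).app Z ≫ eqToHom (by rw [Nat.cast_succ])

lemma truncTransition_comp_app {η : ∀ n : ℤ, τle n ⟶ 𝟭 C}
    (ησ : ∀ (n : ℤ) (X : C), (σ n).app X ≫ (η (n + 1)).app X = (η n).app X) (Z : C) (m : ℕ) :
    truncTransition τle σ Z m ≫ (η ((m + 1 : ℕ) : ℤ)).app Z = (η m).app Z := by
  have h (i j : ℤ) (hij : i = j) :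
      eqToHom (congrArg (fun n => (τle n).obj Z) hij) ≫ (η j).app Z = (η i).app Z := by
    subst hij
    simp
  rw [truncTransition, Category.assoc, h _ _ (by push_cast; rfl), ησ]

end Truncations

section Triangulated

variable {C : Type*} [Category C] [Preadditive C] [HasZeroObject C] [HasShift C ℤ]
  [∀ n : ℤ, (shiftFunctor C n).Additive] [Pretriangulated C]

lemma isIso_shift_map_mor₁_of_isZero {A : Type*} [Category A] [Abelian A] (H : C ⥤ A)
    [H.IsHomological] [H.ShiftSequence ℤ] {T : Triangle C} (hT : T ∈ distTriang C)
    (n₀ n₁ : ℤ) (h : n₀ + 1 = n₁) (h₀ : IsZero ((H.shift n₀).obj T.obj₃))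
    (h₁ : IsZero ((H.shift n₁).obj T.obj₃)) : IsIso ((H.shift n₁).map T.mor₁) :=
  have := (H.homologySequence_exact₁ T hT n₀ n₁ h).mono_g (h₀.eq_of_src _ _)
  have := (H.homologySequence_exact₂ T hT n₁).epi_f (h₁.eq_of_tgt _ _)
  isIso_of_mono_of_epi _

section TStructure

variable (t : TStructure C) {A : Type*} [Category A] (H : C ⥤ A)

lemma ge_obj₃_of_distTriang {T : Triangle C} (hT : T ∈ distTriang C) {n : ℤ}
    (h₁ : t.ge n T.obj₁) (h₂ : t.ge n T.obj₂) : t.ge (n - 1) T.obj₃ :=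
  (t.isGE₂ _ (rot_of_distTriang _ hT) (n - 1) ⟨t.ge_antitone (by omega) _ h₂⟩
    ⟨t.ge_shift n 1 (n - 1) (by omega) _ h₁⟩).ge

lemma isZero_shift_obj_of_ge [H.ShiftSequence ℤ] (hH_ge : ∀ X : C, t.ge 1 X → IsZero (H.obj X))
    {X : C} {a n : ℤ} (hX : t.ge a X) (hn : n < a) : IsZero ((H.shift n).obj X) :=
  (hH_ge _ (t.ge_antitone (by omega) _ (t.ge_shift a n (a - n) (by omega) X hX))).of_iso
    ((H.isoShift n).app X).symm

lemma ge_of_mem_homologicalKernel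
    (hH_detect : ∀ (X : C) (n : ℤ), t.ge n X → IsZero (H.obj (X⟦n⟧)) → t.ge (n + 1) X)
    {X : C} (hX : H.homologicalKernel X) {a : ℤ} (ha : t.ge a X) (n : ℤ) : t.ge n X := by
  have hk (k : ℕ) : t.ge (a + k) X := by
    induction k with
    | zero => simpa using ha
    | succ k ih => simpa [add_assoc] using hH_detect X _ ih (hX _)
  exact t.ge_antitone (by omega : n ≤ a + (n - a).toNat) _ (hk _)

lemma ge_zero_truncLE_obj {τle : ℤ → C ⥤ C} {η : ∀ n : ℤ, τle n ⟶ 𝟭 C}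
    (htri : ∀ (i : ℤ) (X : C), ∃ (Y : C) (_ : t.ge (i + 1) Y)
      (g : X ⟶ Y) (d : Y ⟶ ((τle i).obj X)⟦(1 : ℤ)⟧),
      Triangle.mk ((η i).app X) g d ∈ distTriang C)
    {Z : C} (hZ : t.ge 0 Z) (m : ℕ) : t.ge 0 ((τle m).obj Z) := by
  obtain ⟨Y, hY, _, _, hT⟩ := htri m Z
  exact (t.isGE₂ _ (inv_rot_of_distTriang _ hT) 0
    ⟨t.ge_antitone (by omega) _ (t.ge_shift _ (-1) ((m : ℤ) + 2) (by omega) _ hY)⟩ ⟨hZ⟩).ge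

end TStructure

end Triangulated

section Hocolim

variable {C : Type*} [Category C] [Preadditive C] [HasColimitsOfShape (Discrete ℕ) C]
  (τle : ℤ → C ⥤ C) (σ : ∀ n : ℤ, τle n ⟶ τle (n + 1))

lemma ι_oneMinusShift (Z : C) (m : ℕ) :
    Sigma.ι (fun m : ℕ => (τle (m : ℤ)).obj Z) m ≫ oneMinusShift τle σ Z =
      Sigma.ι (fun m : ℕ => (τle (m : ℤ)).obj Z) m -
        truncTransition τle σ Z m ≫ Sigma.ι (fun m : ℕ => (τle (m : ℤ)).obj Z) (m + 1) := by
  simp [oneMinusShift, truncTransition]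

lemma map_ι_comp_map_oneMinusShift {A : Type*} [Category A] [Preadditive A] (G : C ⥤ A)
    [G.Additive] (Z : C) (m : ℕ) :
    G.map (Sigma.ι (fun m : ℕ => (τle (m : ℤ)).obj Z) m) ≫ G.map (oneMinusShift τle σ Z) =
      G.map (Sigma.ι (fun m : ℕ => (τle (m : ℤ)).obj Z) m) -
        G.map (truncTransition τle σ Z m) ≫
          G.map (Sigma.ι (fun m : ℕ => (τle (m : ℤ)).obj Z) (m + 1)) := by
  rw [← G.map_comp, ι_oneMinusShift, G.map_sub, G.map_comp]

lemma mono_map_oneMinusShift {A : Type*} [Category A] [Abelian A] [HasColimitsOfShape ℕ A]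
    [HasExactColimitsOfShape ℕ A] (G : C ⥤ A) [G.Additive]
    [PreservesColimitsOfShape (Discrete ℕ) G] (Z : C) : Mono (G.map (oneMinusShift τle σ Z)) :=
  mono_of_ι_comp_eq_sub (fun m => G.map (truncTransition τle σ Z m))
    (isColimitOfHasCoproductOfPreservesColimit G _) (map_ι_comp_map_oneMinusShift τle σ G Z)

noncomputable def isColimitMapCokernelCofork {A : Type*} [Category A] [Preadditive A]
    (G : C ⥤ A) [G.Additive] [PreservesColimitsOfShape (Discrete ℕ) G]
    {η : ∀ n : ℤ, τle n ⟶ 𝟭 C}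
    (ησ : ∀ (n : ℤ) (X : C), (σ n).app X ≫ (η (n + 1)).app X = (η n).app X) (Z : C) (N : ℕ)
    (hN : ∀ m : ℕ, N ≤ m → IsIso (G.map ((η m).app Z))) {L : C}
    {g : (∐ fun n : ℕ => (τle (n : ℤ)).obj Z) ⟶ L} (hg : oneMinusShift τle σ Z ≫ g = 0)
    {φ : L ⟶ Z} (hφ : ∀ n : ℕ, Sigma.ι (fun m : ℕ => (τle (m : ℤ)).obj Z) n ≫ g ≫ φ =
      (η (n : ℤ)).app Z) :
    IsColimit (CokernelCofork.ofπ (G.map (g ≫ φ))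
      (by rw [← G.map_comp, reassoc_of% hg, zero_comp, G.map_zero])) :=
  isColimitCokernelCoforkOfEventuallyIso (fun m => G.map (truncTransition τle σ Z m))
    (isColimitOfHasCoproductOfPreservesColimit G _) (map_ι_comp_map_oneMinusShift τle σ G Z)
    (fun m => G.map ((η m).app Z))
    (fun m => by rw [← G.map_comp, truncTransition_comp_app τle σ ησ]) N hN
    (fun m => by rw [← G.map_comp, hφ]) _

variable [HasZeroObject C] [HasShift C ℤ] [∀ n : ℤ, (shiftFunctor C n).Additive]
  [Pretriangulated C] (t : TStructure C) {η : ∀ n : ℤ, τle n ⟶ 𝟭 C}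

lemma ge_neg_one_of_hocolim
    (htri : ∀ (i : ℤ) (X : C), ∃ (Y : C) (_ : t.ge (i + 1) Y)
      (g : X ⟶ Y) (d : Y ⟶ ((τle i).obj X)⟦(1 : ℤ)⟧),
      Triangle.mk ((η i).app X) g d ∈ distTriang C)
    (hcoprod : ∀ f : ℕ → C, (∀ n, t.ge 0 (f n)) → t.ge 0 (∐ f))
    {Z : C} (hZ : t.ge 0 Z) {L : C} {g : (∐ fun n : ℕ => (τle (n : ℤ)).obj Z) ⟶ L}
    {d : L ⟶ (∐ fun n : ℕ => (τle (n : ℤ)).obj Z)⟦(1 : ℤ)⟧}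
    (hT : Triangle.mk (oneMinusShift τle σ Z) g d ∈ distTriang C) : t.ge (-1) L :=
  have hS := hcoprod _ fun m => ge_zero_truncLE_obj t htri hZ m
  ge_obj₃_of_distTriang t hT hS hS

lemma isIso_shift_map_of_hocolim
    (ησ : ∀ (n : ℤ) (X : C), (σ n).app X ≫ (η (n + 1)).app X = (η n).app X)
    (htri : ∀ (i : ℤ) (X : C), ∃ (Y : C) (_ : t.ge (i + 1) Y)
      (g : X ⟶ Y) (d : Y ⟶ ((τle i).obj X)⟦(1 : ℤ)⟧),
      Triangle.mk ((η i).app X) g d ∈ distTriang C)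
    {A : Type*} [Category A] [Abelian A] [HasColimitsOfShape ℕ A] [HasExactColimitsOfShape ℕ A]
    (H : C ⥤ A) [H.IsHomological] [H.ShiftSequence ℤ] [PreservesColimitsOfShape (Discrete ℕ) H]
    (hH_ge : ∀ X : C, t.ge 1 X → IsZero (H.obj X))
    {Z L : C} {g : (∐ fun n : ℕ => (τle (n : ℤ)).obj Z) ⟶ L}
    {d : L ⟶ (∐ fun n : ℕ => (τle (n : ℤ)).obj Z)⟦(1 : ℤ)⟧}
    (hT : Triangle.mk (oneMinusShift τle σ Z) g d ∈ distTriang C) {φ : L ⟶ Z}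
    (hφ : ∀ n : ℕ, Sigma.ι (fun m : ℕ => (τle (m : ℤ)).obj Z) n ≫ g ≫ φ = (η (n : ℤ)).app Z)
    (k : ℤ) : IsIso ((H.shift k).map φ) := by
  have (n : ℤ) : PreservesColimitsOfShape (Discrete ℕ) (H.shift n) :=
    preservesColimitsOfShape_of_natIso (H.isoShift n)
  have hδ := (H.homologySequence_mono_shift_map_mor₁_iff _ hT k (k + 1) rfl).1
    (mono_map_oneMinusShift τle σ (H.shift (k + 1)) Z)
  have := (H.homologySequence_epi_shift_map_mor₂_iff _ hT k (k + 1) rfl).2 hδ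
  have hη (m : ℕ) (hm : k.toNat ≤ m) : IsIso ((H.shift k).map ((η m).app Z)) := by
    obtain ⟨Y, hY, _, _, hTY⟩ := htri m Z
    exact isIso_shift_map_mor₁_of_isZero H hTY (k - 1) k (by omega)
      (isZero_shift_obj_of_ge t H hH_ge hY (by omega))
      (isZero_shift_obj_of_ge t H hH_ge hY (by omega))
  exact isIso_of_isColimit_cokernelCofork ((H.shift k).map_comp g φ).symm
    (H.homologySequence_exact₂ _ hT k).gIsCokernel
    (isColimitMapCokernelCofork τle σ (H.shift k) ησ Z k.toNat hη
      (comp_distTriang_mor_zero₁₂ _ hT) hφ)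

end Hocolim

variable {C : Type*} [Category C]
  [Preadditive C] [HasZeroObject C] [HasShift C ℤ]
  [∀ n : ℤ, (shiftFunctor C n).Additive] [Pretriangulated C]
  [HasColimitsOfShape (Discrete ℕ) C]
  (τle : ℤ → C ⥤ C) (σ : ∀ n : ℤ, τle n ⟶ τle (n + 1))

theorem stmt3 (t : TStructure C)
    (hle : ∀ (i : ℤ) (X : C), t.le i ((τle i).obj X))
    (η : ∀ n : ℤ, τle n ⟶ 𝟭 C)
    (ησ : ∀ (n : ℤ) (X : C), (σ n).app X ≫ (η (n + 1)).app X = (η n).app X)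
    (htri : ∀ (i : ℤ) (X : C), ∃ (Y : C) (_ : t.ge (i + 1) Y)
      (g : X ⟶ Y) (d : Y ⟶ ((τle i).obj X)⟦(1 : ℤ)⟧),
      Triangle.mk ((η i).app X) g d ∈ distTriang C)
    -- the coaisle is closed under countable coproducts
    (hcoprod : ∀ f : ℕ → C, (∀ n, t.ge 0 (f n)) → t.ge 0 (∐ f))
    -- the heart and the homological functor `H^0_t`
    {A : Type*} [Category A] [Abelian A] [HasFilteredColimits A] [AB5 A]
    (H : C ⥤ A) [H.IsHomological] [PreservesColimitsOfShape (Discrete ℕ) H]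
    (hH_ge : ∀ X : C, t.ge 1 X → IsZero (H.obj X))
    (hH_detect : ∀ (X : C) (n : ℤ), t.ge n X → IsZero (H.obj (X⟦n⟧)) →
      t.ge (n + 1) X) :
    RightComplete τle σ t η ↔ (∀ X : C, (∀ n : ℕ, t.ge (n : ℤ) X) → IsZero X) := by
  constructor
  · intro hrc X hX
    obtain ⟨L, g, d, hT⟩ := distinguished_cocone_triangle (oneMinusShift τle σ X)
    refine ((isIsoZero_iff_source_target_isZero L X).1
      (hrc X (by simpa using hX 0) L g d hT 0 fun n => ?_)).2
    rw [comp_zero, comp_zero]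
    exact (t.zero_of_isLE_of_isGE _ n (n + 1) (by omega) ⟨hle n X⟩
      ⟨by exact_mod_cast hX (n + 1)⟩).symm
  · intro hint Z hZ L g d hT φ hφ
    let := Functor.ShiftSequence.tautological H ℤ
    obtain ⟨_, _⟩ := exists_hasExactColimitsOfShape_nat A
    obtain ⟨W, w, δ, hW⟩ := distinguished_cocone_triangle φ
    have hWker : H.homologicalKernel W :=
      (H.homologicalKernel.trW_iff_of_distinguished _ hW).1
        ((H.mem_homologicalKernel_trW_iff φ).2
          (isIso_shift_map_of_hocolim τle σ t ησ htri H hH_ge hT hφ))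
    have hWge : t.ge (-2) W := by
      simpa using ge_obj₃_of_distTriang t hW (ge_neg_one_of_hocolim τle σ t htri hcoprod hZ hT)
        (t.ge_antitone (by omega : (-1 : ℤ) ≤ 0) _ hZ)
    exact (Triangle.isZero₃_iff_isIso₁ _ hW).1
      (hint W fun n => ge_of_mem_homologicalKernel t H hH_detect hWker hWge n)

end Stmt3
end

section
/- Let R be a dg-ring, P a filtered poset, and R{P} the free dg-category on P. Then the constant weight c_{P^op} : R{P}^op → dgm(R), sending each object to R, is h-flat: for every acyclic dg R{P}^op-module N, the tensor product c_{P^op} ⊗_{R{P}} N is acyclic. -/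
/-!
Colimits of complexes are computed degreewise, so the short complex of `colimit N` at `i` is
`colim` applied to the short complex of diagrams `N_(i-1) ⟶ N_i ⟶ N_(i+1)`. The latter is exact
because it is exact pointwise, and filtered colimits of modules are exact (AB5), so `colim`
preserves its exactness.
-/

open CategoryTheory Limits

namespace CategoryTheory.ShortComplex

variable {J C : Type*} [Category J] [Category C] [Abelian C]

lemma exact_of_forall_exact_map_evaluation (S : ShortComplex (J ⥤ C))
    (hS : ∀ j, (S.map ((evaluation J C).obj j)).Exact) : S.Exact := by
  rw [S.exact_iff_isZero_homology]
  exact Functor.isZero _ fun j ↦ ((exact_iff_isZero_homology _).1 (hS j)).of_iso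
    (S.mapHomologyIso ((evaluation J C).obj j)).symm

end CategoryTheory.ShortComplex

namespace HomologicalComplex

variable {J C ι : Type*} [Category J] [Category C] [Abelian C] {c : ComplexShape ι}
  [HasColimitsOfShape J C] [HasExactColimitsOfShape J C]

lemma exactAt_colimit (N : J ⥤ HomologicalComplex C c) (i : ι)
    (hN : ∀ j, (N.obj j).ExactAt i) : (colimit N).ExactAt i := by
  let S := (ShortComplex.functorEquivalence J C).inverse.obj (N ⋙ shortComplexFunctor C c i)
  have hS : S.Exact := ShortComplex.exact_of_forall_exact_map_evaluation _ fun j ↦ hN j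
  exact colim.exact_mapShortComplex hS
    (isColimitOfPreserves (eval C c _) (colimit.isColimit N))
    (isColimitOfPreserves (eval C c _) (colimit.isColimit N))
    (isColimitOfPreserves (eval C c _) (colimit.isColimit N))
    _ _ (fun j ↦ (colimit.ι N j).comm _ _) (fun j ↦ (colimit.ι N j).comm _ _)

end HomologicalComplex

theorem stmt7 {R : Type} [Ring R] {P : Type} [PartialOrder P]
    [Nonempty P] [IsDirected P (· ≤ ·)]
    (N : P ⥤ CochainComplex (ModuleCat.{0} R) ℤ)
    (hN : ∀ (p : P) (k : ℤ), (N.obj p).ExactAt k) :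
    ∀ k : ℤ, (colimit N).ExactAt k := fun k ↦
  HomologicalComplex.exactAt_colimit N k fun p ↦ hN p k
end

section
/- Let A be an essentially small strongly pretriangulated dg-category with a bounded t-structure. Then A, embedded via Yoneda in Ind^{dg,Q,+}(A) with the induced t-structure, coincides with the full dg-subcategory hfp^b of bounded homotopically finitely presented objects: A ≅ { X ∈ Ind^{dg,Q,+}(A) : H^n_t(X) ∈ fp(heart) for all n, and X is bounded for the t-structure }. -/
/-!
A t-exact triangulated functor commutes with truncations, because a triangle
`X₁ → X → X₃ → X₁⟦1⟧` with `X₁ ≤ a` and `X₃ ≥ a + 1` is unique up to isomorphism. Hence `ι A₀` is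
bounded and `τ_{≤n} τ_{≥n} (ι A₀) ≅ ι (τ_{≤n} τ_{≥n} A₀)`, where `(τ_{≤n} τ_{≥n} A₀)⟦n⟧` lies in the
heart. Conversely, if `X ≥ a` then `X` is an extension of `τ_{≥a+1} X` by
`τ_{≤a} X ≅ τ_{≤a} τ_{≥a} X`, and `τ_{≥a+1} X` has the cohomology of `X` in degrees `> a` and none
below; by induction on the length of a bounded `X`, it lies in the essential image of `ι`, which
is closed under extensions since `ι` is full and triangulated.
-/

open CategoryTheory Limits Pretriangulated Triangulated

namespace CategoryTheory.Triangulated.TStructure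

section

variable {C : Type*} [Category C] [Preadditive C] [HasZeroObject C] [HasShift C ℤ]
  [∀ n : ℤ, (shiftFunctor C n).Additive] [Pretriangulated C] (t : TStructure C)

lemma nonempty_iso_triangleLEGE_obj {T : Triangle C} (hT : T ∈ distTriang C) (a b : ℤ)
    (h : a + 1 = b) (h₁ : t.IsLE T.obj₁ a) (h₃ : t.IsGE T.obj₃ b) :
    Nonempty (T ≅ (t.triangleLEGE a b h).obj T.obj₂) := by
  obtain ⟨e, -⟩ := t.triangle_iso_exists hT (t.triangleLEGE_distinguished a b h T.obj₂)
    (Iso.refl _) a b h₁ h₃ (by rw [triangleLEGE_obj_obj₁]; infer_instance)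
    (by rw [triangleLEGE_obj_obj₃]; infer_instance)
  exact ⟨e⟩

lemma nonempty_iso_truncLE_obj {T : Triangle C} (hT : T ∈ distTriang C) (a b : ℤ)
    (h : a + 1 = b) (h₁ : t.IsLE T.obj₁ a) (h₃ : t.IsGE T.obj₃ b) :
    Nonempty (T.obj₁ ≅ (t.truncLE a).obj T.obj₂) := by
  obtain ⟨e⟩ := t.nonempty_iso_triangleLEGE_obj hT a b h h₁ h₃
  exact ⟨Triangle.π₁.mapIso e ≪≫ eqToIso (t.triangleLEGE_obj_obj₁ a b h T.obj₂)⟩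

lemma nonempty_iso_truncGE_obj {T : Triangle C} (hT : T ∈ distTriang C) (a b : ℤ)
    (h : a + 1 = b) (h₁ : t.IsLE T.obj₁ a) (h₃ : t.IsGE T.obj₃ b) :
    Nonempty (T.obj₃ ≅ (t.truncGE b).obj T.obj₂) := by
  obtain ⟨e⟩ := t.nonempty_iso_triangleLEGE_obj hT a b h h₁ h₃
  exact ⟨Triangle.π₃.mapIso e ≪≫ eqToIso (t.triangleLEGE_obj_obj₃ a b h T.obj₂)⟩

/- Mathlib proves the next three facts assuming `[IsTriangulated C]`; they hold without the
octahedral axiom. -/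
lemma isIso_truncGE_map_truncGEπ_app' (a b : ℤ) (h : b ≤ a) (X : C) :
    IsIso ((t.truncGE a).map ((t.truncGEπ b).app X)) := by
  have : t.IsGE ((t.truncGE a).obj X) b := t.isGE_of_ge _ b a h
  let u : (t.truncGE b).obj X ⟶ (t.truncGE a).obj X := t.descTruncGE ((t.truncGEπ a).app X) b
  have hπu : (t.truncGEπ b).app X ≫ u = (t.truncGEπ a).app X := t.π_descTruncGE _ b
  have hπ := t.truncGEπ_naturality a ((t.truncGEπ b).app X)
  have hu : u ≫ (t.truncGE a).map ((t.truncGEπ b).app X) =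
      (t.truncGEπ a).app ((t.truncGE b).obj X) := by
    have : t.IsGE ((t.truncGE a).obj ((t.truncGE b).obj X)) b := t.isGE_of_ge _ b a h
    exact t.from_truncGE_obj_ext (by rw [reassoc_of% hπu]; exact hπ)
  refine ⟨t.descTruncGE u a, t.from_truncGE_obj_ext ?_, t.from_truncGE_obj_ext ?_⟩
  · simp only [Functor.id_obj, Category.comp_id]
    rw [reassoc_of% hπ, t.π_descTruncGE u a, hπu]
  · simp only [Functor.id_obj, Category.comp_id]
    rw [t.π_descTruncGE_assoc u a, hu]

lemma isGE_truncLE_obj_of_isGE (X : C) (a b : ℤ) [t.IsGE X a] :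
    t.IsGE ((t.truncLE b).obj X) a := by
  refine t.isGE₂ _ (inv_rot_of_distTriang _ (t.triangleLEGE_distinguished b (b + 1) rfl X)) a
    ?_ ‹_›
  rw [Triangle.invRotate_obj₁, triangleLEGE_obj_obj₃]
  have := t.isGE_shift ((t.truncGE (b + 1)).obj X) a (-1) (a + 1)
  exact t.isGE_of_ge _ a (a + 1)

lemma isLE_truncGE_obj_of_isLE (X : C) (a b : ℤ) [t.IsLE X b] :
    t.IsLE ((t.truncGE a).obj X) b := by
  refine t.isLE₂ _ (rot_of_distTriang _ (t.triangleLEGE_distinguished (a - 1) a (by omega) X)) b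
    ‹_› ?_
  rw [Triangle.rotate_obj₃, triangleLEGE_obj_obj₁]
  have := t.isLE_shift ((t.truncLE (a - 1)).obj X) b 1 (b - 1)
  exact t.isLE_of_le _ (b - 1) b

lemma bounded_iff_exists_isZero (X : C) :
    t.bounded X ↔ ∃ M : ℕ, IsZero ((t.truncLE (-(M : ℤ) - 1)).obj X) ∧
      IsZero ((t.truncGE ((M : ℤ) + 1)).obj X) := by
  constructor
  · rintro ⟨⟨a, _⟩, ⟨b, _⟩⟩
    refine ⟨max a.natAbs b.natAbs, ?_, ?_⟩
    · rw [← t.isGE_iff_isZero_truncLE_obj _ _ (sub_add_cancel _ 1)]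
      exact t.isGE_of_ge X _ a (by omega)
    · rw [← t.isLE_iff_isZero_truncGE_obj _ _ rfl]
      exact t.isLE_of_le X b _ (by omega)
  · rintro ⟨M, hge, hle⟩
    exact ⟨⟨_, (t.isGE_iff_isZero_truncLE_obj _ _ (sub_add_cancel _ 1) X).2 hge⟩,
      ⟨_, (t.isLE_iff_isZero_truncGE_obj _ _ rfl X).2 hle⟩⟩

section

variable (P : ObjectProperty C) [P.IsClosedUnderIsomorphisms]

lemma prop_of_prop_truncLE_truncGE_of_prop_truncGE [P.IsTriangulatedClosed₂] {X : C} (a : ℤ)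
    [t.IsGE X a] (ha : P ((t.truncLE a).obj ((t.truncGE a).obj X)))
    (h : P ((t.truncGE (a + 1)).obj X)) : P X :=
  P.ext_of_isTriangulatedClosed₂ _ (t.triangleLEGE_distinguished a (a + 1) rfl X)
    (P.prop_of_iso ((t.truncLE a).mapIso (asIso ((t.truncGEπ a).app X))).symm ha) h

lemma prop_truncLE_truncGE_truncGE_obj [P.ContainsZero] {X : C}
    (hX : ∀ n, P ((t.truncLE n).obj ((t.truncGE n).obj X))) (b n : ℤ) :
    P ((t.truncLE n).obj ((t.truncGE n).obj ((t.truncGE b).obj X))) := by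
  by_cases h : b ≤ n
  · have := t.isIso_truncGE_map_truncGEπ_app' n b h X
    exact P.prop_of_iso ((t.truncLE n).mapIso (asIso ((t.truncGE n).map ((t.truncGEπ b).app X))))
      (hX n)
  · have : t.IsGE ((t.truncGE b).obj X) (n + 1) := t.isGE_of_ge _ (n + 1) b (by omega)
    exact P.prop_of_isZero (t.isZero_truncLE_obj_of_isGE n (n + 1) rfl _)

lemma prop_of_isGE_of_isLE [P.ContainsZero] [P.IsTriangulatedClosed₂] (k : ℕ) (a : ℤ) (X : C)
    [t.IsGE X a] [t.IsLE X (a + k)] (hX : ∀ n, P ((t.truncLE n).obj ((t.truncGE n).obj X))) :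
    P X := by
  induction k generalizing a X with
  | zero =>
    have : t.IsLE X a := t.isLE_of_le X (a + (0 : ℕ)) a (by simp)
    exact t.prop_of_prop_truncLE_truncGE_of_prop_truncGE P a (hX a)
      (P.prop_of_isZero (t.isZero_truncGE_obj_of_isLE a (a + 1) rfl X))
  | succ k ih =>
    have : t.IsLE X (a + 1 + k) := t.isLE_of_le X (a + (k + 1 : ℕ)) _ (by push_cast; omega)
    have := t.isLE_truncGE_obj_of_isLE X (a + 1) (a + 1 + k)
    exact t.prop_of_prop_truncLE_truncGE_of_prop_truncGE P a (hX a)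
      (ih (a + 1) _ (t.prop_truncLE_truncGE_truncGE_obj P hX (a + 1)))

end

end

variable {A D : Type*} [Category A] [Category D]
    [Preadditive A] [HasZeroObject A] [HasShift A ℤ]
    [∀ n : ℤ, (shiftFunctor A n).Additive] [Pretriangulated A]
    [Preadditive D] [HasZeroObject D] [HasShift D ℤ]
    [∀ n : ℤ, (shiftFunctor D n).Additive] [Pretriangulated D]
    (s : TStructure A) (t : TStructure D) (F : A ⥤ D) [F.CommShift ℤ] [F.IsTriangulated]

lemma nonempty_truncLE_obj_map_iso
    (hF_le : ∀ (n : ℤ) (X : A), s.IsLE X n → t.IsLE (F.obj X) n)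
    (hF_ge : ∀ (n : ℤ) (X : A), s.IsGE X n → t.IsGE (F.obj X) n) (n : ℤ) (X : A) :
    Nonempty ((t.truncLE n).obj (F.obj X) ≅ F.obj ((s.truncLE n).obj X)) := by
  obtain ⟨e⟩ := t.nonempty_iso_truncLE_obj
    (F.map_distinguished _ (s.triangleLEGE_distinguished n (n + 1) rfl X)) n (n + 1) rfl
    (hF_le n ((s.truncLE n).obj X) inferInstance)
    (hF_ge (n + 1) ((s.truncGE (n + 1)).obj X) inferInstance)
  exact ⟨e.symm⟩

lemma nonempty_truncGE_obj_map_iso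
    (hF_le : ∀ (n : ℤ) (X : A), s.IsLE X n → t.IsLE (F.obj X) n)
    (hF_ge : ∀ (n : ℤ) (X : A), s.IsGE X n → t.IsGE (F.obj X) n) (n : ℤ) (X : A) :
    Nonempty ((t.truncGE n).obj (F.obj X) ≅ F.obj ((s.truncGE n).obj X)) := by
  obtain ⟨e⟩ := t.nonempty_iso_truncGE_obj
    (F.map_distinguished _ (s.triangleLEGE_distinguished (n - 1) n (by omega) X)) (n - 1) n
    (by omega) (hF_le (n - 1) ((s.truncLE (n - 1)).obj X) inferInstance)
    (hF_ge n ((s.truncGE n).obj X) inferInstance)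
  exact ⟨e.symm⟩

lemma exists_mem_heart_truncLE_truncGE_map_obj_iso
    (hF_le : ∀ (n : ℤ) (X : A), s.IsLE X n → t.IsLE (F.obj X) n)
    (hF_ge : ∀ (n : ℤ) (X : A), s.IsGE X n → t.IsGE (F.obj X) n) (n : ℤ) (X : A) :
    ∃ A₀ : A, s.heart A₀ ∧
      Nonempty ((t.truncLE n).obj ((t.truncGE n).obj (F.obj X)) ≅ (F.obj A₀)⟦-n⟧) := by
  let B := (s.truncLE n).obj ((s.truncGE n).obj X)
  obtain ⟨e₁⟩ := nonempty_truncGE_obj_map_iso s t F hF_le hF_ge n X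
  obtain ⟨e₂⟩ := nonempty_truncLE_obj_map_iso s t F hF_le hF_ge n ((s.truncGE n).obj X)
  have := s.isGE_truncLE_obj_of_isGE ((s.truncGE n).obj X) n n
  refine ⟨B⟦n⟧, (s.mem_heart_iff _).2 ⟨s.isLE_shift B n n 0, s.isGE_shift B n n 0⟩, ⟨?_⟩⟩
  exact (t.truncLE n).mapIso e₁ ≪≫ e₂ ≪≫
    F.mapIso ((shiftFunctorCompIsoId A n (-n) (by omega)).app B).symm ≪≫
    (F.commShiftIso (-n)).app (B⟦n⟧)

theorem mem_essImage_iff_bounded_and_truncLE_truncGE_iso (hbdd : ∀ X : A, s.bounded X) [F.Full]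
    (hF_le : ∀ (n : ℤ) (X : A), s.IsLE X n → t.IsLE (F.obj X) n)
    (hF_ge : ∀ (n : ℤ) (X : A), s.IsGE X n → t.IsGE (F.obj X) n) (X : D) :
    F.essImage X ↔ t.bounded X ∧ ∀ n : ℤ, ∃ A₀ : A, s.heart A₀ ∧
      Nonempty ((t.truncLE n).obj ((t.truncGE n).obj X) ≅ (F.obj A₀)⟦-n⟧) := by
  constructor
  · rintro ⟨A₀, ⟨e⟩⟩
    obtain ⟨⟨a, _⟩, ⟨b, _⟩⟩ := hbdd A₀
    have := hF_ge a A₀ inferInstance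
    have := hF_le b A₀ inferInstance
    refine ⟨⟨⟨a, t.isGE_of_iso e a⟩, ⟨b, t.isLE_of_iso e b⟩⟩, fun n ↦ ?_⟩
    obtain ⟨A₁, hA₁, ⟨e'⟩⟩ := exists_mem_heart_truncLE_truncGE_map_obj_iso s t F hF_le hF_ge n A₀
    exact ⟨A₁, hA₁, ⟨(t.truncLE n).mapIso ((t.truncGE n).mapIso e.symm) ≪≫ e'⟩⟩
  · rintro ⟨⟨⟨a, _⟩, ⟨b, _⟩⟩, hH⟩
    have : t.IsLE X (a + (b - a).toNat) := t.isLE_of_le X b _ (by omega)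
    refine t.prop_of_isGE_of_isLE F.essImage (b - a).toNat a X (fun n ↦ ?_)
    obtain ⟨A₀, -, ⟨e⟩⟩ := hH n
    exact ⟨A₀⟦-n⟧, ⟨(F.commShiftIso (-n)).app A₀ ≪≫ e.symm⟩⟩

end CategoryTheory.Triangulated.TStructure

/- `D` stands for the homotopy category of `Ind^{dg,Q,+}(A)`, `τle i`, `τge i` for the truncation
functors of its t-structure `t`, and `Hⁿ_t(X)` is `(τle n (τge n X))⟦n⟧`. -/
theorem stmt14 {A D : Type*} [Category A] [Category D]
    [Preadditive A] [HasZeroObject A] [HasShift A ℤ]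
    [∀ n : ℤ, (shiftFunctor A n).Additive] [Pretriangulated A]
    [Preadditive D] [HasZeroObject D] [HasShift D ℤ]
    [∀ n : ℤ, (shiftFunctor D n).Additive] [Pretriangulated D]
    (s : TStructure A) (t : TStructure D)
    -- the t-structure on `A` is bounded
    (hbdd : ∀ X : A, ∃ n : ℕ, s.le (n : ℤ) X ∧ s.ge (-(n : ℤ)) X)
    -- the Yoneda embedding, fully faithful and t-exact
    (ι : A ⥤ D) [ι.Full] [ι.Faithful] [ι.CommShift ℤ] [ι.IsTriangulated]
    (hι_le : ∀ (n : ℤ) (X : A), s.le n X → t.le n (ι.obj X))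
    (hι_ge : ∀ (n : ℤ) (X : A), s.ge n X → t.ge n (ι.obj X))
    -- truncation data for `t`
    (τle τge : ℤ → D ⥤ D)
    (hle : ∀ (i : ℤ) (X : D), t.le i ((τle i).obj X))
    (hge : ∀ (i : ℤ) (X : D), t.ge i ((τge i).obj X))
    (η : ∀ i : ℤ, τle i ⟶ 𝟭 D) (ε : ∀ i : ℤ, 𝟭 D ⟶ τge i)
    (htri : ∀ (i : ℤ) (X : D), ∃ d : (τge (i + 1)).obj X ⟶ ((τle i).obj X)⟦(1 : ℤ)⟧,
      Triangle.mk ((η i).app X) ((ε (i + 1)).app X) d ∈ distTriang D) :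
    ∀ X : D,
      (∃ A₀ : A, Nonempty (X ≅ ι.obj A₀)) ↔
        -- `X` is bounded for the induced t-structure ...
        ((∃ M : ℕ, IsZero ((τle (-(M : ℤ) - 1)).obj X) ∧
            IsZero ((τge ((M : ℤ) + 1)).obj X)) ∧
          -- ... and all its t-cohomologies are finitely presented in the heart
          -- `Ind(H⁰(A)^♥)`, i.e. come from the heart of `A`
          (∀ n : ℤ, ∃ A₀ : A, s.le 0 A₀ ∧ s.ge 0 A₀ ∧
            Nonempty ((τle n).obj ((τge n).obj X) ≅ (ι.obj A₀)⟦-n⟧))) := by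
  intro X
  have eLE : ∀ i Y, Nonempty ((τle i).obj Y ≅ (t.truncLE i).obj Y) := fun i Y ↦ by
    obtain ⟨d, hT⟩ := htri i Y
    exact t.nonempty_iso_truncLE_obj hT i (i + 1) rfl ⟨hle i Y⟩ ⟨hge (i + 1) Y⟩
  have eGE : ∀ i Y, Nonempty ((τge i).obj Y ≅ (t.truncGE i).obj Y) := fun i Y ↦ by
    obtain ⟨j, rfl⟩ : ∃ j, i = j + 1 := ⟨i - 1, by omega⟩
    obtain ⟨d, hT⟩ := htri j Y
    exact t.nonempty_iso_truncGE_obj hT j (j + 1) rfl ⟨hle j Y⟩ ⟨hge (j + 1) Y⟩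
  have eH : ∀ n, (τle n).obj ((τge n).obj X) ≅ (t.truncLE n).obj ((t.truncGE n).obj X) :=
    fun n ↦ (eLE n _).some ≪≫ (t.truncLE n).mapIso (eGE n X).some
  have key := TStructure.mem_essImage_iff_bounded_and_truncLE_truncGE_iso s t ι
    (fun Y ↦ let ⟨n, hle, hge⟩ := hbdd Y; ⟨⟨_, ⟨hge⟩⟩, ⟨_, ⟨hle⟩⟩⟩)
    (fun n Y h ↦ ⟨hι_le n Y h.1⟩) (fun n Y h ↦ ⟨hι_ge n Y h.1⟩) X
  rw [t.bounded_iff_exists_isZero] at key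
  refine (exists_congr fun A₀ ↦ Iso.nonempty_iso_symm _ _).trans (key.trans (and_congr ?_ ?_))
  · exact exists_congr fun M ↦
      and_congr (eLE _ X).some.isZero_iff.symm (eGE _ X).some.isZero_iff.symm
  · exact forall_congr' fun n ↦ exists_congr fun A₀ ↦ and_assoc.trans <| and_congr_right' <|
      and_congr_right' ⟨fun ⟨e⟩ ↦ ⟨eH n ≪≫ e⟩, fun ⟨e⟩ ↦ ⟨(eH n).symm ≪≫ e⟩⟩
end

section
/- Let T be a triangulated category with a t-structure that is left bounded locally coherent Grothendieck. Then every bounded homotopically finitely presented object of T is compact: hfp^b(T) ⊆ T^c. -/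
/-!
Compactness of `X` says that for every coproduct cocone `c` of a family `F`, the canonical map
`⊕ⱼ Hom(X, F j) → Hom(X, c.pt)` is bijective. Both sides are cohomological in `X`, so by the
five lemma compact objects are closed under extensions; they are also closed under shifts.
For `X` bounded with all `Hⁿ(X) ∈ fp(T^♥) ⊆ T^c`, descending induction on `n` shows that
`τ_{≥n} X` is compact: it is an extension of `τ_{≥n+1} τ_{≥n} X ≅ τ_{≥n+1} X` by
`τ_{≤n} τ_{≥n} X = Hⁿ(X)[-n]`. Since `X` is bounded, `τ_{≥n} X` is `0` for large `n` and
`X` for small `n`.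
-/

open CategoryTheory Limits Pretriangulated Triangulated Opposite

namespace Stmt16

def IsCompactObj {D : Type*} [Category D] [Preadditive D] (X : D) : Prop :=
  ∀ J : Type, Nonempty
    (PreservesColimitsOfShape (Discrete J) (preadditiveCoyoneda.obj (Opposite.op X)))

end Stmt16

namespace AddCommGrpCat

open Colimits

lemma relations_discrete_eq_bot {J : Type*} [DecidableEq J] (K : Discrete J ⥤ AddCommGrpCat) :
    Relations K = ⊥ := by
  refine AddSubgroup.closure_eq_bot_iff.2 ?_
  rintro _ ⟨j, j', u, a, rfl⟩
  obtain rfl := Discrete.ext (Discrete.eq_of_hom u)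
  simp [Subsingleton.elim u (𝟙 j)]

lemma isColimit_discrete_iff_bijective_sumAddHom {J : Type*} [DecidableEq J]
    {K : Discrete J ⥤ AddCommGrpCat} (c : Cocone K) :
    Nonempty (IsColimit c) ↔ Function.Bijective
      (DFinsupp.sumAddHom fun j => (c.ι.app j).hom : (Π₀ j, K.obj j) →+ c.pt) := by
  have hmk : Function.Bijective (QuotientAddGroup.mk' (Relations K)) := by
    refine ⟨(injective_iff_map_eq_zero _).2 fun x hx => ?_, QuotientAddGroup.mk'_surjective _⟩
    rwa [← AddMonoidHom.mem_ker, QuotientAddGroup.ker_mk', relations_discrete_eq_bot] at hx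
  have hdesc : (Quot.desc K c).comp (QuotientAddGroup.mk' (Relations K)) =
      DFinsupp.sumAddHom fun j => (c.ι.app j).hom :=
    DFinsupp.addHom_ext fun j a => by
      rw [DFinsupp.sumAddHom_single]
      exact Quot.ι_desc K c j a
  rw [isColimit_iff_bijective_desc, ← hdesc]
  exact (Function.Bijective.of_comp_iff _ hmk).symm

end AddCommGrpCat

lemma DFinsupp.exact_mapRange_addMonoidHom {ι : Type*} {M N P : ι → Type*}
    [∀ i, AddCommGroup (M i)] [∀ i, AddCommGroup (N i)] [∀ i, AddCommGroup (P i)]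
    (f : ∀ i, M i →+ N i) (g : ∀ i, N i →+ P i) (h : ∀ i, Function.Exact (f i) (g i)) :
    Function.Exact (DFinsupp.mapRange.addMonoidHom f) (DFinsupp.mapRange.addMonoidHom g) := by
  classical
  intro y
  refine ⟨fun hy => ?_, ?_⟩
  · have hyi : ∀ i, y i ∈ Set.range (f i) := fun i =>
      (h i (y i)).1 (by simpa using DFunLike.congr_fun hy i)
    choose x hx using hyi
    refine ⟨DFinsupp.mk y.support fun i => x i, DFinsupp.ext fun i => ?_⟩
    by_cases hi : i ∈ y.support
    · simp [hi, hx]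
    · simp [hi, DFinsupp.notMem_support_iff.1 hi]
  · rintro ⟨x, rfl⟩
    ext i
    simpa using (h i (f i (x i))).2 ⟨x i, rfl⟩

namespace Stmt16

lemma nonempty_iso_of_bijective_comp {C : Type*} [Category C] (P : ObjectProperty C)
    {X Y Y' : C} (f : X ⟶ Y) (f' : X ⟶ Y') (hY : P Y) (hY' : P Y')
    (hf : ∀ W, P W → Function.Bijective fun g : Y ⟶ W => f ≫ g)
    (hf' : ∀ W, P W → Function.Bijective fun g : Y' ⟶ W => f' ≫ g) :
    Nonempty (Y ≅ Y') := by
  obtain ⟨g, hg⟩ := (hf Y' hY').2 f'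
  obtain ⟨g', hg'⟩ := (hf' Y hY).2 f
  dsimp only at hg hg'
  refine ⟨⟨g, g', (hf Y hY).1 ?_, (hf' Y' hY').1 ?_⟩⟩
  · simp only [reassoc_of% hg, hg', Category.comp_id]
  · simp only [reassoc_of% hg', hg, Category.comp_id]

section Triangulated

variable {D : Type*} [Category D] [Preadditive D] [HasZeroObject D] [HasShift D ℤ]
  [∀ n : ℤ, (shiftFunctor D n).Additive] [Pretriangulated D]

lemma exact_leftComp_of_distTriang {T : Triangle D} (hT : T ∈ distTriang D) (Z : D) :
    Function.Exact (Preadditive.leftComp Z T.mor₂) (Preadditive.leftComp Z T.mor₁) := by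
  intro f
  refine ⟨fun hf => ?_, ?_⟩
  · obtain ⟨g, rfl⟩ := Triangle.yoneda_exact₂ T hT f hf
    exact ⟨g, rfl⟩
  · rintro ⟨g, rfl⟩
    simp [Preadditive.leftComp, comp_distTriang_mor_zero₁₂_assoc _ hT]

lemma bijective_leftComp_mor₂_of_distTriang {T : Triangle D} (hT : T ∈ distTriang D) (W : D)
    (h₁ : ∀ f : T.obj₁ ⟶ W, f = 0) (h₁' : ∀ f : T.obj₁⟦(1 : ℤ)⟧ ⟶ W, f = 0) :
    Function.Bijective (Preadditive.leftComp W T.mor₂) := by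
  refine ⟨(injective_iff_map_eq_zero _).2 fun g hg => ?_,
    fun f => (exact_leftComp_of_distTriang hT W f).1 (h₁ _)⟩
  obtain ⟨h, rfl⟩ := (exact_leftComp_of_distTriang (rot_of_distTriang _ hT) W g).1 hg
  rw [show h = 0 from h₁' h]
  exact map_zero _

end Triangulated

section Compact

variable {D : Type*} [Category D] [Preadditive D]

open Classical in
noncomputable def sigmaHom {J : Type} {F : Discrete J ⥤ D} (c : Cocone F) (X : D) :
    (Π₀ j, X ⟶ F.obj j) →+ (X ⟶ c.pt) :=
  DFinsupp.sumAddHom fun j => Preadditive.rightComp X (c.ι.app j)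

noncomputable def sigmaLeftComp {J : Type} (F : Discrete J ⥤ D) {X Y : D} (g : X ⟶ Y) :
    (Π₀ j, Y ⟶ F.obj j) →+ (Π₀ j, X ⟶ F.obj j) :=
  DFinsupp.mapRange.addMonoidHom fun j => Preadditive.leftComp (F.obj j) g

open Classical in
lemma leftComp_comp_sigmaHom {J : Type} {F : Discrete J ⥤ D} (c : Cocone F) {X Y : D}
    (g : X ⟶ Y) :
    (Preadditive.leftComp c.pt g).comp (sigmaHom c Y) =
      (sigmaHom c X).comp (sigmaLeftComp F g) :=
  DFinsupp.addHom_ext fun j f => by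
    simp [sigmaHom, sigmaLeftComp, Preadditive.leftComp, Preadditive.rightComp]

lemma isCompactObj_iff_bijective_sigmaHom (X : D) :
    IsCompactObj X ↔ ∀ (J : Type) (F : Discrete J ⥤ D) (c : Cocone F), IsColimit c →
      Function.Bijective (sigmaHom c X) := by
  classical
  refine ⟨fun hX J F c hc => ?_, fun hX J => ⟨⟨fun {F} => ⟨fun {c} hc => ?_⟩⟩⟩⟩
  · have := (hX J).some
    exact (AddCommGrpCat.isColimit_discrete_iff_bijective_sumAddHom _).1
      ⟨isColimitOfPreserves (preadditiveCoyoneda.obj (op X)) hc⟩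
  · exact (AddCommGrpCat.isColimit_discrete_iff_bijective_sumAddHom _).2 (hX J F c hc)

lemma isCompactObj_of_isZero {X : D} (hX : IsZero X) : IsCompactObj X := by
  refine (isCompactObj_iff_bijective_sigmaHom X).2 fun J F c _ =>
    ⟨fun s s' _ => ?_, fun f => ⟨0, hX.eq_of_src _ _⟩⟩
  ext j
  exact hX.eq_of_src _ _

lemma isCompactObj_of_iso {X Y : D} (e : X ≅ Y) (hX : IsCompactObj X) : IsCompactObj Y :=
  fun J => have := (hX J).some
  ⟨preservesColimitsOfShape_of_natIso (preadditiveCoyoneda.mapIso e.op).symm⟩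

section Shift

variable [HasShift D ℤ] [∀ n : ℤ, (shiftFunctor D n).Additive]

noncomputable def preadditiveCoyonedaShiftIso (X : D) (n : ℤ) :
    preadditiveCoyoneda.obj (op (X⟦n⟧)) ≅
      shiftFunctor D (-n) ⋙ preadditiveCoyoneda.obj (op X) :=
  haveI : (shiftEquiv D n).functor.Additive := inferInstanceAs (shiftFunctor D n).Additive
  NatIso.ofComponents
    (fun Z => ((shiftEquiv D n).toAdjunction.homAddEquiv X Z).toAddCommGrpIso)
    (fun g => by
      ext f
      exact (shiftEquiv D n).toAdjunction.homEquiv_naturality_right f g)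

lemma IsCompactObj.shift {X : D} (hX : IsCompactObj X) (n : ℤ) : IsCompactObj (X⟦n⟧) :=
  fun J => have := (hX J).some
  ⟨preservesColimitsOfShape_of_natIso (preadditiveCoyonedaShiftIso X n).symm⟩

lemma isCompactObj_shift_iff (X : D) (n : ℤ) : IsCompactObj (X⟦n⟧) ↔ IsCompactObj X :=
  ⟨fun h => isCompactObj_of_iso ((shiftEquiv D n).unitIso.symm.app X) (h.shift (-n)),
    fun h => h.shift n⟩

end Shift

section Triangulated

variable [HasZeroObject D] [HasShift D ℤ] [∀ n : ℤ, (shiftFunctor D n).Additive]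
  [Pretriangulated D]

lemma exact_sigmaLeftComp_of_distTriang {J : Type} (F : Discrete J ⥤ D) {T : Triangle D}
    (hT : T ∈ distTriang D) :
    Function.Exact (sigmaLeftComp F T.mor₂) (sigmaLeftComp F T.mor₁) :=
  DFinsupp.exact_mapRange_addMonoidHom _ _ fun j => exact_leftComp_of_distTriang hT (F.obj j)

lemma isCompactObj₂_of_distTriang {T : Triangle D} (hT : T ∈ distTriang D)
    (h₁ : IsCompactObj T.obj₁) (h₃ : IsCompactObj T.obj₃) : IsCompactObj T.obj₂ := by
  have h₁' := h₁.shift 1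
  have h₃' := h₃.shift (-1)
  rw [isCompactObj_iff_bijective_sigmaHom] at h₁ h₃ h₁' h₃' ⊢
  intro J F c hc
  -- five lemma for `⊕ⱼ Hom(-, F j) → Hom(-, c.pt)` along
  -- `T.obj₁⟦1⟧ → T.obj₃ → T.obj₂ → T.obj₁ → T.obj₃⟦-1⟧`
  exact AddMonoidHom.bijective_of_surjective_of_bijective_of_bijective_of_injective
    (sigmaLeftComp F T.mor₃) (sigmaLeftComp F T.mor₂) (sigmaLeftComp F T.mor₁)
    (sigmaLeftComp F T.invRotate.mor₁)
    (Preadditive.leftComp c.pt T.mor₃) (Preadditive.leftComp c.pt T.mor₂)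
    (Preadditive.leftComp c.pt T.mor₁) (Preadditive.leftComp c.pt T.invRotate.mor₁)
    (sigmaHom c _) (sigmaHom c _) (sigmaHom c _) (sigmaHom c _) (sigmaHom c _)
    (leftComp_comp_sigmaHom c _) (leftComp_comp_sigmaHom c _) (leftComp_comp_sigmaHom c _)
    (leftComp_comp_sigmaHom c _)
    (exact_sigmaLeftComp_of_distTriang F (rot_of_distTriang _ hT))
    (exact_sigmaLeftComp_of_distTriang F hT)
    (exact_sigmaLeftComp_of_distTriang F (inv_rot_of_distTriang _ hT))
    (exact_leftComp_of_distTriang (rot_of_distTriang _ hT) c.pt)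
    (exact_leftComp_of_distTriang hT c.pt)
    (exact_leftComp_of_distTriang (inv_rot_of_distTriang _ hT) c.pt)
    (h₁' J F c hc).2 (h₃ J F c hc) (h₁ J F c hc) (h₃' J F c hc).1

end Triangulated

end Compact

section TStructure

variable {T : Type*} [Category T] [Preadditive T] [HasZeroObject T] [HasShift T ℤ]
  [∀ n : ℤ, (shiftFunctor T n).Additive] [Pretriangulated T]

structure TruncationData (t : TStructure T) where
  truncLE : ℤ → T ⥤ T
  truncGE : ℤ → T ⥤ T
  le_truncLE (n : ℤ) (X : T) : t.le n ((truncLE n).obj X)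
  ge_truncGE (n : ℤ) (X : T) : t.ge n ((truncGE n).obj X)
  ι (n : ℤ) : truncLE n ⟶ 𝟭 T
  π (n : ℤ) : 𝟭 T ⟶ truncGE n
  exists_distTriang (n : ℤ) (X : T) :
    ∃ d : (truncGE (n + 1)).obj X ⟶ ((truncLE n).obj X)⟦(1 : ℤ)⟧,
      Triangle.mk ((ι n).app X) ((π (n + 1)).app X) d ∈ distTriang T

namespace TruncationData

variable {t : TStructure T} (τ : TruncationData t)

lemma bijective_leftComp_π (n : ℤ) (X : T) {W : T} (hW : t.ge n W) :
    Function.Bijective (Preadditive.leftComp W ((τ.π n).app X)) := by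
  obtain ⟨m, rfl⟩ : ∃ m, n = m + 1 := ⟨n - 1, by omega⟩
  obtain ⟨d, hd⟩ := τ.exists_distTriang m X
  exact bijective_leftComp_mor₂_of_distTriang hd W
    (fun f => t.zero_of_isLE_of_isGE f m (m + 1) (by omega) ⟨τ.le_truncLE m X⟩ ⟨hW⟩)
    (fun f => t.zero_of_isLE_of_isGE f (m - 1) (m + 1) (by omega)
      ⟨t.le_shift m 1 (m - 1) (by omega) _ (τ.le_truncLE m X)⟩ ⟨hW⟩)

lemma nonempty_truncGE_truncGE_iso (n : ℤ) (X : T) :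
    Nonempty ((τ.truncGE (n + 1)).obj ((τ.truncGE n).obj X) ≅ (τ.truncGE (n + 1)).obj X) :=
  nonempty_iso_of_bijective_comp (t.ge (n + 1))
    ((τ.π n).app X ≫ (τ.π (n + 1)).app _) ((τ.π (n + 1)).app X)
    (τ.ge_truncGE _ _) (τ.ge_truncGE _ _)
    (fun W hW => by
      convert (τ.bijective_leftComp_π n X (t.ge_antitone (by omega) W hW)).comp
        (τ.bijective_leftComp_π (n + 1) _ hW) using 1
      funext g
      simp [Preadditive.leftComp])
    (fun W hW => τ.bijective_leftComp_π (n + 1) X hW)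

lemma ge_truncLE_obj {n : ℤ} {X : T} (hX : t.ge n X) : t.ge n ((τ.truncLE n).obj X) := by
  obtain ⟨d, hd⟩ := τ.exists_distTriang n X
  refine (t.isGE₂ _ (inv_rot_of_distTriang _ hd) n ⟨?_⟩ ⟨hX⟩).ge
  exact t.ge_antitone (by omega) _
    (t.ge_shift (n + 1) (-1) (n + 2) (by omega) _ (τ.ge_truncGE _ _))

lemma isCompactObj_truncGE_obj (X : T)
    (hH : ∀ n, IsCompactObj ((τ.truncLE n).obj ((τ.truncGE n).obj X))) :
    ∀ (k : ℕ) (n : ℤ), IsZero ((τ.truncGE (n + k)).obj X) →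
      IsCompactObj ((τ.truncGE n).obj X)
  | 0, n, hz => isCompactObj_of_isZero (by simpa using hz)
  | k + 1, n, hz => by
    have hnext : IsCompactObj ((τ.truncGE (n + 1)).obj X) :=
      isCompactObj_truncGE_obj X hH k (n + 1) (by convert hz using 3; push_cast; ring)
    obtain ⟨e⟩ := τ.nonempty_truncGE_truncGE_iso n X
    obtain ⟨d, hd⟩ := τ.exists_distTriang n ((τ.truncGE n).obj X)
    exact isCompactObj₂_of_distTriang hd (hH n) (isCompactObj_of_iso e.symm hnext)

end TruncationData

end TStructure

theorem stmt16 {T : Type*} [Category T]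
    [Preadditive T] [HasZeroObject T] [HasShift T ℤ]
    [∀ n : ℤ, (shiftFunctor T n).Additive] [Pretriangulated T]
    (t : TStructure T)
    -- the t-structure is left bounded
    (hlb : ∀ X : T, ∃ n : ℕ, t.ge (-(n : ℤ)) X)
    -- truncation data for `t`
    (τle τge : ℤ → T ⥤ T)
    (hle : ∀ (i : ℤ) (X : T), t.le i ((τle i).obj X))
    (hge : ∀ (i : ℤ) (X : T), t.ge i ((τge i).obj X))
    (η : ∀ i : ℤ, τle i ⟶ 𝟭 T) (ε : ∀ i : ℤ, 𝟭 T ⟶ τge i)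
    (htri : ∀ (i : ℤ) (X : T), ∃ d : (τge (i + 1)).obj X ⟶ ((τle i).obj X)⟦(1 : ℤ)⟧,
      Triangle.mk ((η i).app X) ((ε (i + 1)).app X) d ∈ distTriang T)
    -- "finitely presented in the heart", closed under isomorphisms
    (Fp : T → Prop)
    (hFp_iso : ∀ X Y : T, (X ≅ Y) → Fp X → Fp Y)
    -- the axiom `fp(T^♥) ⊆ T^c` of a left bounded locally coherent Grothendieck
    -- t-structure
    (hfp_compact : ∀ Y : T, t.le 0 Y → t.ge 0 Y → Fp Y → IsCompactObj Y) :
    -- every bounded object all of whose t-cohomologies `Hⁿ_t` are finitely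
    -- presented in the heart is compact
    ∀ X : T,
      (∃ M : ℕ, IsZero ((τle (-(M : ℤ) - 1)).obj X) ∧
        IsZero ((τge ((M : ℤ) + 1)).obj X)) →
      (∀ n : ℤ, Fp (((τle n).obj ((τge n).obj X))⟦n⟧)) →
      IsCompactObj X := by
  rintro X ⟨M, hM₁, hM₂⟩ hFp
  let τ : TruncationData t := ⟨τle, τge, hle, hge, η, ε, htri⟩
  have hcohom : ∀ n, IsCompactObj ((τle n).obj ((τge n).obj X)) := fun n =>
    (isCompactObj_shift_iff _ n).1 (hfp_compact _ (t.le_shift n n 0 (add_zero n) _ (hle n _))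
      (t.ge_shift n n 0 (add_zero n) _ (τ.ge_truncLE_obj (hge n X))) (hFp n))
  obtain ⟨d, hd⟩ := htri (-(M : ℤ) - 1) X
  have : IsIso ((ε (-(M : ℤ) - 1 + 1)).app X) := (Triangle.isZero₁_iff_isIso₂ _ hd).1 hM₁
  refine isCompactObj_of_iso (asIso ((ε (-(M : ℤ) - 1 + 1)).app X)).symm
    (τ.isCompactObj_truncGE_obj X hcohom (2 * M + 1) _ ?_)
  convert hM₂ using 3
  push_cast
  ring

end Stmt16
end
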